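/- Let V be a self-orthogonal d-dimensional F_q-subspace of F_q^{2n}, let c : V → ℂ with c(0) = 1 be such that W(v) := c(v)·W̃(v) satisfies W(v) W(v') = W(v+v') for all v, v' ∈ V, and let (P_{[w]})_{[w] ∈ F_q^{2n}/V^{⊥J}} be the family of mutually orthogonal projections summing to the identity with W(v) = ∑_{[w]} ω^{⟨v,Jw⟩} P_{[w]} for all v ∈ V. Then for all w, w' ∈ F_q^{2n}, conjugation satisfies W̃(w') P_{[w]} W̃(w')* = P_{[w+w']}, where W̃(w')* denotes the conjugate transpose of W̃(w'). -/

import Mathlib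

/-- `ω = exp(2πi/p)`, a primitive `p`-th root of unity. -/
noncomputable def omg (p : ℕ) : ℂ := Complex.exp (2 * (Real.pi : ℂ) * Complex.I / (p : ℂ))

/-- The `F_p`-valued pairing `⟨x, y⟩ = tr(∑ s, x s * y s)` on `F_q^n`, where
`tr : F_q → F_p` is the field trace. -/
noncomputable def ip (p : ℕ) {K : Type*} [Field K] [Fintype K] [Algebra (ZMod p) K]
    {n : ℕ} (x y : Fin n → K) : ZMod p :=
  Algebra.trace (ZMod p) K (∑ s, x s * y s)

/-- The Weyl operator `W̃(a,b)`: the `q^n × q^n` complex matrix, with rows and columns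
indexed by `F_q^n`, whose `(j,k)` entry is `ω^{⟨b,k⟩}` if `j = k + a` and `0`
otherwise. -/
noncomputable def Wt (p : ℕ) {K : Type*} [Field K] [Fintype K] [DecidableEq K]
    [Algebra (ZMod p) K] {n : ℕ} (a b : Fin n → K) :
    Matrix (Fin n → K) (Fin n → K) ℂ :=
  Matrix.of fun j k => if j = k + a then omg p ^ (ip p b k).val else 0

/-- The Weyl operator `W̃(v)` of a vector `v = (a,b) ∈ F_q^{2n} = F_q^n × F_q^n`. -/
noncomputable def Wtv (p : ℕ) {K : Type*} [Field K] [Fintype K] [DecidableEq K]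
    [Algebra (ZMod p) K] {n : ℕ} (v : (Fin n → K) × (Fin n → K)) :
    Matrix (Fin n → K) (Fin n → K) ℂ :=
  Wt p v.1 v.2

/-- The symplectic pairing `⟨v, Jw⟩ = ⟨v.2, w.1⟩ − ⟨v.1, w.2⟩ ∈ F_p` on
`F_q^{2n} = F_q^n × F_q^n`, where `J = [[0, −I_n],[I_n, 0]]`. -/
noncomputable def symp (p : ℕ) {K : Type*} [Field K] [Fintype K] [Algebra (ZMod p) K]
    {n : ℕ} (v w : (Fin n → K) × (Fin n → K)) : ZMod p :=
  ip p v.2 w.1 - ip p v.1 w.2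

lemma ip_add_right (p : ℕ) {K : Type*} [Field K] [Fintype K] [Algebra (ZMod p) K]
    {n : ℕ} (x y y' : Fin n → K) : ip p x (y + y') = ip p x y + ip p x y' := by
  unfold ip
  rw [← map_add]
  congr 1
  simp [mul_add, Finset.sum_add_distrib]

lemma ip_neg_right (p : ℕ) {K : Type*} [Field K] [Fintype K] [Algebra (ZMod p) K]
    {n : ℕ} (x y : Fin n → K) : ip p x (-y) = - ip p x y := by
  unfold ip
  rw [← map_neg]
  congr 1
  simp [mul_neg]

lemma ip_zero_right (p : ℕ) {K : Type*} [Field K] [Fintype K] [Algebra (ZMod p) K]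
    {n : ℕ} (x : Fin n → K) : ip p x 0 = 0 := by
  simp [ip]

/-- `V^{⊥J} = {w ∈ F_q^{2n} : ⟨v, Jw⟩ = 0 for all v ∈ V}`, as an additive subgroup of
`F_q^{2n}` (so that one can form the quotient `F_q^{2n} / V^{⊥J}`). -/
def sympPerp (p : ℕ) {K : Type*} [Field K] [Fintype K] [Algebra (ZMod p) K]
    {n : ℕ} (V : Submodule K ((Fin n → K) × (Fin n → K))) :
    AddSubgroup ((Fin n → K) × (Fin n → K)) where
  carrier := {w | ∀ v ∈ V, symp p v w = 0}
  zero_mem' := by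
    intro v _
    simp [symp, ip_zero_right]
  add_mem' := by
    intro w w' hw hw' v hv
    have h : symp p v (w + w') = symp p v w + symp p v w' := by
      simp only [symp, Prod.fst_add, Prod.snd_add, ip_add_right]
      ring
    rw [h, hw v hv, hw' v hv, add_zero]
  neg_mem' := by
    intro w hw v hv
    have h : symp p v (-w) = - symp p v w := by
      simp only [symp, Prod.fst_neg, Prod.snd_neg, ip_neg_right]
      ring
    rw [h, hw v hv, neg_zero]

/-!
Orthogonality of the characters `v ↦ ω^{⟨v,Ju⟩}` of `V`, which are trivial exactly when
`u ∈ V^{⊥J}`, inverts the spectral decomposition: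
`|V| P_{[u]} = ∑_{v ∈ V} ω^{-⟨v,Ju⟩} c(v) W̃(v)`.
Conjugation by `W̃(w')` multiplies `W̃(v)` by `ω^{⟨w',Jv⟩} = ω^{-⟨v,Jw'⟩}`, which turns the
coefficients for `u` into those for `u + w'`.
-/

open Matrix ZMod

lemma omg_pow_val_eq_stdAddChar (p : ℕ) [NeZero p] (k : ZMod p) :
    omg p ^ k.val = stdAddChar k := by
  have h := stdAddChar_coe (N := p) (k.val : ℤ)
  rw [Int.cast_natCast, natCast_zmod_val] at h
  rw [h, omg, ← Complex.exp_nat_mul]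
  congr 1
  push_cast
  ring

lemma star_stdAddChar {p : ℕ} [NeZero p] (k : ZMod p) :
    star (stdAddChar k) = stdAddChar (-k) := by
  rw [AddChar.map_neg_eq_inv, stdAddChar_apply, ← Circle.coe_inv, Circle.coe_inv_eq_conj]
  rfl

lemma stdAddChar_eq_one_iff {p : ℕ} [NeZero p] {k : ZMod p} : stdAddChar k = 1 ↔ k = 0 := by
  rw [← AddChar.map_zero_eq_one (stdAddChar (N := p)), injective_stdAddChar.eq_iff]

section Pairings

variable (p : ℕ) {K : Type*} [Field K] [Fintype K] [Algebra (ZMod p) K] {n : ℕ}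

lemma ip_comm (x y : Fin n → K) : ip p x y = ip p y x := by
  simp only [ip, mul_comm]

lemma ip_add_left (x x' y : Fin n → K) : ip p (x + x') y = ip p x y + ip p x' y := by
  rw [ip_comm, ip_add_right, ip_comm p y x, ip_comm p y x']

lemma ip_neg_left (x y : Fin n → K) : ip p (-x) y = - ip p x y := by
  rw [ip_comm, ip_neg_right, ip_comm]

variable {p}

lemma symp_add_left (v v' w : (Fin n → K) × (Fin n → K)) :
    symp p (v + v') w = symp p v w + symp p v' w := by
  simp only [symp, Prod.fst_add, Prod.snd_add, ip_add_left]
  ring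

lemma symp_add_right (v w w' : (Fin n → K) × (Fin n → K)) :
    symp p v (w + w') = symp p v w + symp p v w' := by
  simp only [symp, Prod.fst_add, Prod.snd_add, ip_add_right]
  ring

lemma symp_neg_right (v w : (Fin n → K) × (Fin n → K)) : symp p v (-w) = -symp p v w := by
  simp only [symp, Prod.fst_neg, Prod.snd_neg, ip_neg_right]
  ring

lemma symp_sub_right (v w w' : (Fin n → K) × (Fin n → K)) :
    symp p v (w - w') = symp p v w - symp p v w' := by
  rw [sub_eq_add_neg, symp_add_right, symp_neg_right, sub_eq_add_neg]

lemma symp_comm (v w : (Fin n → K) × (Fin n → K)) : symp p v w = -symp p w v := by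
  rw [symp, symp, ip_comm p v.2, ip_comm p v.1]
  ring

end Pairings

section Weyl

variable {p : ℕ} [NeZero p] {K : Type*} [Field K] [Fintype K] [DecidableEq K]
  [Algebra (ZMod p) K] {n : ℕ}

lemma Wtv_apply (v : (Fin n → K) × (Fin n → K)) (j k : Fin n → K) :
    Wtv p v j k = if j = k + v.1 then stdAddChar (ip p v.2 k) else 0 := by
  simp [Wtv, Wt, omg_pow_val_eq_stdAddChar]

lemma Wtv_mul (v v' : (Fin n → K) × (Fin n → K)) :
    Wtv p v * Wtv p v' = stdAddChar (ip p v.2 v'.1) • Wtv p (v + v') := by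
  ext j k
  rw [Matrix.mul_apply, Finset.sum_eq_single (k + v'.1)]
  · simp only [Wtv_apply, Matrix.smul_apply, Prod.fst_add, Prod.snd_add, add_comm v.1,
      ← add_assoc, if_true, mul_ite, mul_zero, smul_eq_mul, ip_add_right, ip_add_left,
      AddChar.map_add_eq_mul]
    split_ifs <;> ring
  · intro m _ hm
    simp [Wtv_apply, hm]
  · simp

lemma Wtv_conjTranspose (v : (Fin n → K) × (Fin n → K)) :
    (Wtv p v)ᴴ = stdAddChar (ip p v.2 v.1) • Wtv p (-v) := by
  ext j k
  simp only [Matrix.conjTranspose_apply, Matrix.smul_apply, Wtv_apply, Prod.fst_neg,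
    Prod.snd_neg, smul_eq_mul]
  by_cases h : k = j + v.1
  · obtain rfl := h
    simp only [if_true, add_neg_cancel_right, star_stdAddChar, ← AddChar.map_add_eq_mul,
      ip_add_right, ip_neg_left]
    ring_nf
  · have h' : j ≠ k + -v.1 := fun hj => h (by rw [hj]; abel)
    simp [h, h']

lemma Wtv_mul_mul_conjTranspose (w v : (Fin n → K) × (Fin n → K)) :
    Wtv p w * Wtv p v * (Wtv p w)ᴴ = stdAddChar (symp p w v) • Wtv p v := by
  rw [Wtv_mul, Wtv_conjTranspose, Matrix.smul_mul, Matrix.mul_smul, Wtv_mul,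
    add_neg_cancel_comm, smul_smul, smul_smul, ← AddChar.map_add_eq_mul,
    ← AddChar.map_add_eq_mul]
  congr 2
  simp only [symp, Prod.snd_add, Prod.fst_neg, ip_neg_right, ip_add_left, ip_comm p w.1]
  ring

end Weyl

section Fourier

variable {p : ℕ} [NeZero p] {K : Type*} [Field K] [Fintype K] [Algebra (ZMod p) K] {n : ℕ}
  (V : Submodule K ((Fin n → K) × (Fin n → K))) [Fintype V]

open scoped Classical in
lemma sum_stdAddChar_symp (u : (Fin n → K) × (Fin n → K)) :
    ∑ v : V, stdAddChar (symp p (v : (Fin n → K) × (Fin n → K)) u) =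
      if (u : ((Fin n → K) × (Fin n → K)) ⧸ sympPerp p V) = 0 then (Fintype.card V : ℂ)
      else 0 := by
  let ψ : AddChar V ℂ := stdAddChar.compAddMonoidHom
    (AddMonoidHom.mk' (fun v : V => symp p (v : (Fin n → K) × (Fin n → K)) u)
      fun v v' => symp_add_left _ _ _)
  have hψ : ψ = 0 ↔ (u : ((Fin n → K) × (Fin n → K)) ⧸ sympPerp p V) = 0 := by
    rw [QuotientAddGroup.eq_zero_iff, AddChar.ext_iff]
    simp [ψ, stdAddChar_eq_one_iff, sympPerp]
  simpa [ψ, hψ] using ψ.sum_eq_ite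

variable {V} {M : Type*} [AddCommGroup M] [Module ℂ M]

lemma card_smul_eq_sum_of_forall_eq_sum (A : (Fin n → K) × (Fin n → K) → M)
    (P : ((Fin n → K) × (Fin n → K)) ⧸ sympPerp p V → M) [Fintype (_ ⧸ sympPerp p V)]
    (hA : ∀ v ∈ V, A v = ∑ x, stdAddChar (symp p v x.out) • P x)
    (u : (Fin n → K) × (Fin n → K)) :
    (Fintype.card V : ℂ) • P u = ∑ v : V, stdAddChar (-symp p (v : _) u) • A v := by
  classical
  symm
  calc ∑ v : V, stdAddChar (-symp p (v : _) u) • A v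
      = ∑ x, (∑ v : V, stdAddChar (symp p (v : _) (x.out - u))) • P x := by
        simp only [fun v : V => hA v v.2, Finset.smul_sum, smul_smul, Finset.sum_smul,
          ← AddChar.map_add_eq_mul, symp_sub_right, neg_add_eq_sub]
        exact Finset.sum_comm
    _ = ∑ x : _ ⧸ sympPerp p V, if x = u then (Fintype.card V : ℂ) • P x else 0 := by
        simp only [sum_stdAddChar_symp, QuotientAddGroup.mk_sub, QuotientAddGroup.out_eq',
          sub_eq_zero, ite_smul, zero_smul]
    _ = (Fintype.card V : ℂ) • P u := Fintype.sum_ite_eq' _ _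

end Fourier

theorem stmt_15_general (p : ℕ) [Fact p.Prime] (K : Type*) [Field K] [Fintype K] [DecidableEq K]
    [Algebra (ZMod p) K] (n : ℕ)
    (V : Submodule K ((Fin n → K) × (Fin n → K)))
    (c : ((Fin n → K) × (Fin n → K)) → ℂ)
    (P : (((Fin n → K) × (Fin n → K)) ⧸ sympPerp p V) →
      Matrix (Fin n → K) (Fin n → K) ℂ)
    (hdec : ∀ v ∈ V, c v • Wtv p v = ∑ᶠ x, omg p ^ (symp p v x.out).val • P x) :
    ∀ w w' : (Fin n → K) × (Fin n → K),
      Wtv p w' * P (QuotientAddGroup.mk w) * (Wtv p w').conjTranspose =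
        P (QuotientAddGroup.mk (w + w')) := by
  classical
  have hP := card_smul_eq_sum_of_forall_eq_sum (fun v => c v • Wtv p v) P fun v hv => by
    simp only [hdec v hv, finsum_eq_sum_of_fintype, omg_pow_val_eq_stdAddChar]
  intro w w'
  have hcard : (Fintype.card V : ℂ) ≠ 0 := Nat.cast_ne_zero.mpr Fintype.card_ne_zero
  rw [← smul_right_inj hcard, ← Matrix.smul_mul, ← Matrix.mul_smul, hP, hP, Matrix.mul_sum,
    Matrix.sum_mul]
  refine Finset.sum_congr rfl fun v _ => ?_
  rw [Matrix.mul_smul, Matrix.mul_smul, Matrix.smul_mul, Matrix.smul_mul,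
    Wtv_mul_mul_conjTranspose, smul_comm (c v), smul_smul, symp_comm w', symp_add_right,
    neg_add, AddChar.map_add_eq_mul]

/-- Lemma 1 of the paper: with `V`, `c`, and the family of projections
`(P_{[w]})` as in Proposition 2, for all `w, w' ∈ F_q^{2n}`,
`W̃(w') P_{[w]} W̃(w')* = P_{[w+w']}`, where `*` is the conjugate transpose. -/
theorem stmt_15 (p : ℕ) [Fact p.Prime] (K : Type*) [Field K] [Fintype K] [DecidableEq K]
    [Algebra (ZMod p) K] (n d : ℕ)
    (V : Submodule K ((Fin n → K) × (Fin n → K)))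
    (hd : Module.finrank K V = d)
    (hV : ∀ v ∈ V, ∀ v' ∈ V, symp p v v' = 0)
    (c : ((Fin n → K) × (Fin n → K)) → ℂ) (hc0 : c 0 = 1)
    (hmul : ∀ v ∈ V, ∀ v' ∈ V,
      (c v • Wtv p v) * (c v' • Wtv p v') = c (v + v') • Wtv p (v + v'))
    (P : (((Fin n → K) × (Fin n → K)) ⧸ sympPerp p V) →
      Matrix (Fin n → K) (Fin n → K) ℂ)
    (hproj : ∀ x, (P x).conjTranspose = P x ∧ P x * P x = P x)
    (horth : ∀ x y, x ≠ y → P x * P y = 0)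
    (hsum : (∑ᶠ x, P x) = 1)
    (hdec : ∀ v ∈ V, c v • Wtv p v = ∑ᶠ x, omg p ^ (symp p v x.out).val • P x) :
    ∀ w w' : (Fin n → K) × (Fin n → K),
      Wtv p w' * P (QuotientAddGroup.mk w) * (Wtv p w').conjTranspose =
        P (QuotientAddGroup.mk (w + w')) :=
  stmt_15_general p K n V c P hdec
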